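/- Let (W,S) be any Coxeter system with S finite and let w = uv be a Grassmannian factorization. Then w is 2-palindromic if and only if u is 2-palindromic and |u·pred(v) ∩ pred(w)| = 1, where u·pred(v) = {uv' : v' ∈ pred(v)}. -/

import Mathlib

/-!
Common definitions for formalizing "Rationally smooth elements of Coxeter groups and
triangle group avoidance" (Richmond–Slofstra).

Conventions: a Coxeter system `cs : CoxeterSystem M W` has Coxeter matrix `M` with entries
in `ℕ`, where `M i j = 0` encodes `m_{ij} = ∞`.
-/

namespace TriAvoid

noncomputable section

open CoxeterSystem

variable {B W : Type*} [Group W] {M : CoxeterMatrix B}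

/-- The Bruhat order on `W`, via the subword property: `x ≤ w` if and only if some reduced
word for `w` has a sublist which is a reduced word for `x`. -/
def bruhatLE (cs : CoxeterSystem M W) (x w : W) : Prop :=
  ∃ l l' : List B, cs.IsReduced l ∧ cs.wordProd l = w ∧
    List.Sublist l' l ∧ cs.IsReduced l' ∧ cs.wordProd l' = x

/-- The `i`-th coefficient `a_i` of the Poincaré polynomial
`P_w(q) = ∑_{x ≤ w} q^{ℓ(x)}` of `w`. -/
def coeff (cs : CoxeterSystem M W) (w : W) (i : ℕ) : ℕ :=
  {x : W | bruhatLE cs x w ∧ cs.length x = i}.ncard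

/-- `w` is palindromic (rationally smooth): `a_i = a_{ℓ(w) - i}` for all `i`. -/
def Palindromic (cs : CoxeterSystem M W) (w : W) : Prop :=
  ∀ i ≤ cs.length w, coeff cs w i = coeff cs w (cs.length w - i)

/-- `w` is `k`-palindromic: `a_i = a_{ℓ(w) - i}` for all `0 ≤ i < k`. -/
def KPalindromic (cs : CoxeterSystem M W) (k : ℕ) (w : W) : Prop :=
  ∀ i < k, i ≤ cs.length w → coeff cs w i = coeff cs w (cs.length w - i)

/-- The support of `w`: the set of (indices of) simple reflections lying below `w`
in Bruhat order.  (These are exactly the elements `u ≤ w` with `ℓ(u) = 1`.) -/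
def supp (cs : CoxeterSystem M W) (w : W) : Set B :=
  {i | bruhatLE cs (cs.simple i) w}

/-- The divisor set `pred(w)` of elements `u ≤ w` with `ℓ(u) = ℓ(w) - 1`. -/
def pred (cs : CoxeterSystem M W) (w : W) : Set W :=
  {x | bruhatLE cs x w ∧ cs.length x + 1 = cs.length w}

/-- The right descent set `D_R(w) = {s ∈ S : ℓ(ws) < ℓ(w)}` (as a set of indices). -/
def DR (cs : CoxeterSystem M W) (w : W) : Set B :=
  {i | cs.IsRightDescent w i}

/-- The left descent set `D_L(w) = {s ∈ S : ℓ(sw) < ℓ(w)}` (as a set of indices). -/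
def DL (cs : CoxeterSystem M W) (w : W) : Set B :=
  {i | cs.IsLeftDescent w i}

/-- The standard parabolic subgroup `W_J` generated by `J ⊆ S`. -/
def parabolic (cs : CoxeterSystem M W) (J : Set B) : Subgroup W :=
  Subgroup.closure (cs.simple '' J)

/-- `v` is the minimal length representative of its coset `W_J v`, i.e. `v ∈ W^J`. -/
def IsMinRep (cs : CoxeterSystem M W) (J : Set B) (v : W) : Prop :=
  ∀ u ∈ parabolic cs J, cs.length v ≤ cs.length (u * v)

/-- `(u)(v)` is the parabolic decomposition of `w = u * v` with respect to `J`: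
`u ∈ W_J`, `v ∈ W^J`, and `ℓ(uv) = ℓ(u) + ℓ(v)`. -/
def IsParabolicDecomp (cs : CoxeterSystem M W) (J : Set B) (u v : W) : Prop :=
  u ∈ parabolic cs J ∧ IsMinRep cs J v ∧
    cs.length (u * v) = cs.length u + cs.length v

/-- `(u)(v)` is a BP-decomposition of `w = u * v` with respect to `J`: a parabolic
decomposition such that `u` is the unique maximal element of `[e, w] ∩ W_J`. -/
def IsBP (cs : CoxeterSystem M W) (J : Set B) (u v : W) : Prop :=
  IsParabolicDecomp cs J u v ∧ bruhatLE cs u (u * v) ∧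
    ∀ x : W, bruhatLE cs x (u * v) → x ∈ parabolic cs J → bruhatLE cs x u

/-- `(u)(v)` is a Grassmannian factorization of `w = u * v`: a parabolic decomposition
with respect to `J = supp(u)` such that `|supp(w)| = |supp(u)| + 1`. -/
def IsGrassmannian (cs : CoxeterSystem M W) (u v : W) : Prop :=
  IsParabolicDecomp cs (supp cs u) u v ∧
    (supp cs (u * v)).ncard = (supp cs u).ncard + 1

/-- `W` avoids every triangle group in `T = {(2,b,c) : b, c ≥ 3, b < ∞}`
(recall `M i j = 0` means `m_{ij} = ∞`). -/
def AvoidsT (M : CoxeterMatrix B) : Prop :=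
  ¬∃ r s t : B, M r s = 2 ∧ 3 ≤ M r t ∧ (3 ≤ M s t ∨ M s t = 0)

/-- The `i`-th coefficient of the relative Poincaré polynomial
`P^J_w(q) = ∑_{x ∈ [e,w] ∩ W^J} q^{ℓ(x)}`. -/
def coeffRel (cs : CoxeterSystem M W) (J : Set B) (w : W) (i : ℕ) : ℕ :=
  {x : W | bruhatLE cs x w ∧ IsMinRep cs J x ∧ cs.length x = i}.ncard

/-- The `q`-integer `[k]_q = 1 + q + ⋯ + q^{k-1}`, as a polynomial in `q`. -/
def qInt (k : ℕ) : Polynomial ℕ :=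
  ∑ i ∈ Finset.range k, Polynomial.X ^ i

/-- The alternating word `stst⋯` of length `k`, starting with `s`. -/
def altWord (s t : B) (k : ℕ) : List B :=
  (List.range k).map fun i => if i % 2 = 0 then s else t

/-- The spiral word `strstr⋯` of length `k`, cycling through `s, t, r` in this order. -/
def spiralWord (s t r : B) (k : ℕ) : List B :=
  (List.range k).map fun i => if i % 3 = 0 then s else if i % 3 = 1 then t else r

/-- `w = u₁ u₂ ⋯ u_d` (given as a list) is a separable factorization: it is reduced and
the supports of the factors are pairwise disjoint. -/
def IsSepFactorization (cs : CoxeterSystem M W) (w : W) (l : List W) : Prop :=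
  w = l.prod ∧ cs.length w = (l.map cs.length).sum ∧
    l.Pairwise fun a b => supp cs a ∩ supp cs b = ∅

/-- `w` is inseparable: it admits no nontrivial separable reduced factorization. -/
def Inseparable (cs : CoxeterSystem M W) (w : W) : Prop :=
  ¬∃ u₁ u₂ : W, u₁ ≠ 1 ∧ u₂ ≠ 1 ∧ w = u₁ * u₂ ∧
    cs.length w = cs.length u₁ + cs.length u₂ ∧ supp cs u₁ ∩ supp cs u₂ = ∅

/-- `w = v₁ v₂ ⋯ v_{|supp(w)|}` (given as a list) is a complete Grassmannian factorization:
for every `i < |supp(w)|`, `(v₁ ⋯ v_i)(v_{i+1})` is a Grassmannian factorization. -/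
def IsCompleteGrassmannian (cs : CoxeterSystem M W) (w : W) (l : List W) : Prop :=
  w = l.prod ∧ l.length = (supp cs w).ncard ∧
    ∀ i < l.length, IsGrassmannian cs ((l.take i).prod) (l.getD i 1)

end

end TriAvoid

/-!
The coefficient `a₁(w)` counts the atoms `s ≤ w` and `a_{ℓ(w)-1}(w) = |pred(w)|`, so `w` is
2-palindromic exactly when it has as many coatoms as atoms.

For a parabolic decomposition `w = uv` with respect to `J`, a coatom of `w` is obtained by deleting
one letter from a reduced word of `u` followed by one of `v`: either it is `u'v` with
`u' ∈ pred(u)`, or it lies in `u·pred(v)`. By Deodhar's lemma `ℓ(gv) = ℓ(g) + ℓ(v)` for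
`g ∈ W_J`, the two kinds are disjoint and every `u'v` is a coatom, so
`|pred(w)| = |pred(u)| + |u·pred(v) ∩ pred(w)|`, the last term being positive when `v ≠ 1`.
For a Grassmannian factorization `w` also has exactly one atom more than `u`. Finally
`a₁(x) ≤ |pred(x)|` for every `x`: split a reduced word of `x` before the letter whose first
occurrence comes last and take the parabolic decomposition with respect to the letters in front
of it; this again adds one atom and at least one coatom, and induction applies.

Only the codimension-one case of the subword property is used. It follows from the strong
exchange condition, which is proved with Tits' sign representation of `W` on `W × ℤˣ`.
-/

namespace List

theorem Sublist.exists_eraseIdx_eq {α : Type*} {l l' : List α} (h : l' <+ l)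
    (hlen : l'.length + 1 = l.length) : ∃ j < l.length, l.eraseIdx j = l' := by
  induction h with
  | slnil => simp at hlen
  | cons _ h _ => exact ⟨0, by simp, (h.eq_of_length (by simpa using hlen)).symm⟩
  | cons_cons _ _ ih =>
    obtain ⟨j, hj, rfl⟩ := ih (by simpa using hlen)
    exact ⟨j + 1, by simpa using hj, rfl⟩

theorem exists_append_cons_image_eq_insert {α β : Type*} (f : α → β) {l : List α}
    (hl : l ≠ []) : ∃ a k b, l = a ++ k :: b ∧ f k ∉ f '' {x | x ∈ a} ∧
      f '' {x | x ∈ l} = insert (f k) (f '' {x | x ∈ a}) := by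
  induction l using List.reverseRecOn with
  | nil => exact absurd rfl hl
  | append_singleton l c ih =>
    have hset : {x | x ∈ l ++ [c]} = insert c {x | x ∈ l} := by
      ext
      simp [or_comm]
    by_cases hc : f c ∈ f '' {x | x ∈ l}
    · obtain ⟨a, k, b, rfl, hk, himg⟩ := ih (by rintro rfl; simp at hc)
      refine ⟨a, k, b ++ [c], by simp, hk, ?_⟩
      rw [hset, Set.image_insert_eq, Set.insert_eq_of_mem hc, himg]
    · exact ⟨l, c, [], rfl, hc, by rw [hset, Set.image_insert_eq]⟩

end List

namespace CoxeterSystem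

open List
open scoped Classical

noncomputable section

variable {B W : Type*} [Group W] {M : CoxeterMatrix B} (cs : CoxeterSystem M W)

local prefix:100 "s" => cs.simple
local prefix:100 "π" => cs.wordProd
local prefix:100 "ℓ" => cs.length
local prefix:100 "ris" => cs.rightInvSeq
local prefix:100 "lis" => cs.leftInvSeq

theorem alternatingWord_two_mul_succ (i j : B) (m : ℕ) :
    alternatingWord i j (2 * (m + 1)) = i :: j :: alternatingWord i j (2 * m) := by
  rw [show 2 * (m + 1) = 2 * m + 1 + 1 by ring, alternatingWord_succ', alternatingWord_succ']
  simp

theorem reverse_alternatingWord_two_mul (i j : B) (m : ℕ) :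
    (alternatingWord i j (2 * m)).reverse = alternatingWord j i (2 * m) := by
  induction m with
  | zero => rfl
  | succ m ih =>
    rw [alternatingWord_two_mul_succ, show 2 * (m + 1) = 2 * m + 1 + 1 by ring,
      alternatingWord_succ, alternatingWord_succ]
    simp [ih]

theorem prod_map_alternatingWord_two_mul {G : Type*} [Monoid G] (f : B → G) (i j : B) (m : ℕ) :
    ((alternatingWord i j (2 * m)).map f).prod = (f i * f j) ^ m := by
  induction m with
  | zero => simp [alternatingWord]
  | succ m ih => rw [alternatingWord_two_mul_succ, map_cons, map_cons, prod_cons, prod_cons, ih,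
      pow_succ', mul_assoc]

theorem even_count_rightInvSeq_alternatingWord_two_mul (i j : B) (t : W) :
    Even ((ris (alternatingWord i j (2 * M i j))).count t) := by
  set m := M i j
  have hlis : lis (alternatingWord j i (2 * m)) =
      (range (2 * m)).map fun k => s j * (s i * s j) ^ k := by
    refine ext_getElem (by simp) fun k hk _ => ?_
    rw [getElem_leftInvSeq_alternatingWord cs j i m k (by simpa using hk),
      prod_alternatingWord_eq_mul_pow]
    simp [Nat.add_div_of_dvd_right]
  have hperiodic : ∀ k, s j * (s i * s j) ^ (m + k) = s j * (s i * s j) ^ k := by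
    intro k
    rw [pow_add, cs.simple_mul_simple_pow, one_mul]
  rw [← reverse_alternatingWord_two_mul, rightInvSeq_reverse, count_reverse, hlis, two_mul,
    range_add, map_append, map_map]
  simp only [Function.comp_def, hperiodic, count_append]
  exact ⟨_, rfl⟩

def signPerm (i : B) : Equiv.Perm (W × ℤˣ) :=
  Function.Involutive.toPerm
    (fun p => (s i * p.1 * s i, if p.1 = s i then -p.2 else p.2))
    (fun ⟨t, ε⟩ => by
      by_cases h : t = s i
      · simp [h, cs.simple_mul_simple_self]
      · simp [h, mul_assoc, mul_eq_one_iff_eq_inv, cs.simple_mul_simple_cancel_left])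

theorem signPerm_apply (i : B) (t : W) (ε : ℤˣ) :
    cs.signPerm i (t, ε) = (s i * t * s i, if t = s i then -ε else ε) :=
  rfl

theorem prod_map_signPerm_apply (ω : List B) (t : W) (ε : ℤˣ) :
    (ω.map cs.signPerm).prod (t, ε) =
      (π ω * t * (π ω)⁻¹, ε * (-1) ^ (ris ω).count t) := by
  induction ω generalizing t ε with
  | nil => simp
  | cons i ω ih =>
    rw [map_cons, prod_cons, Equiv.Perm.mul_apply, ih]
    simp only [signPerm_apply, rightInvSeq, count_cons, wordProd_cons]
    by_cases h : t = (π ω)⁻¹ * s i * π ω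
    · subst h
      simp [mul_assoc, pow_succ]
    · have h' : π ω * t * (π ω)⁻¹ ≠ s i := fun h'' => h (by rw [← h'']; group)
      rw [if_neg h', beq_false_of_ne (Ne.symm h)]
      simp [mul_assoc]

theorem isLiftable_signPerm : M.IsLiftable cs.signPerm := by
  intro i j
  ext1 ⟨t, ε⟩
  have hπ : π (alternatingWord i j (2 * M i j)) = 1 := by
    rw [wordProd, prod_map_alternatingWord_two_mul, cs.simple_mul_simple_pow]
  rw [← prod_map_alternatingWord_two_mul, prod_map_signPerm_apply, hπ,
    (cs.even_count_rightInvSeq_alternatingWord_two_mul i j t).neg_one_pow]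
  simp

def signRep : W →* Equiv.Perm (W × ℤˣ) := cs.lift ⟨cs.signPerm, cs.isLiftable_signPerm⟩

theorem signRep_wordProd (ω : List B) : cs.signRep (π ω) = (ω.map cs.signPerm).prod := by
  rw [wordProd, map_list_prod, map_map]
  congr 2
  ext1 i
  exact cs.lift_apply_simple cs.isLiftable_signPerm i

def invSign (w t : W) : ℤˣ := (cs.signRep w (t, 1)).2

theorem invSign_wordProd (ω : List B) (t : W) :
    cs.invSign (π ω) t = (-1) ^ (ris ω).count t := by
  rw [invSign, signRep_wordProd, prod_map_signPerm_apply, one_mul]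

theorem signRep_apply (w t : W) (ε : ℤˣ) :
    cs.signRep w (t, ε) = (w * t * w⁻¹, ε * cs.invSign w t) := by
  obtain ⟨ω, rfl⟩ := cs.wordProd_surjective w
  rw [signRep_wordProd, prod_map_signPerm_apply, invSign_wordProd]

theorem invSign_mul (a b t : W) :
    cs.invSign (a * b) t = cs.invSign b t * cs.invSign a (b * t * b⁻¹) := by
  have h := congrArg (· (t, 1)) (map_mul cs.signRep a b)
  simp only [Equiv.Perm.mul_apply, signRep_apply, one_mul, Prod.mk.injEq] at h
  exact h.2

theorem invSign_one (t : W) : cs.invSign 1 t = 1 := by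
  simp [invSign]

theorem invSign_self {t : W} (ht : cs.IsReflection t) : cs.invSign t t = -1 := by
  obtain ⟨v, i, rfl⟩ := ht
  have hcancel : cs.invSign v⁻¹ (v * s i * v⁻¹) * cs.invSign v (s i) = 1 := by
    simpa [invSign_one, mul_assoc] using (cs.invSign_mul v v⁻¹ (v * s i * v⁻¹)).symm
  have hsimple : cs.invSign (s i) (s i) = -1 := by
    simpa using cs.invSign_wordProd [i] (s i)
  rw [show v * s i * v⁻¹ = v * (s i * v⁻¹) by group, invSign_mul, invSign_mul,
    show v⁻¹ * (v * (s i * v⁻¹)) * v⁻¹⁻¹ = s i by group,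
    show s i * v⁻¹ * (v * (s i * v⁻¹)) * (s i * v⁻¹)⁻¹ = s i by
      simp [mul_assoc, cs.simple_mul_simple_cancel_left],
    hsimple, mul_neg_one, neg_mul, ← mul_assoc v, hcancel]

theorem mem_rightInvSeq_of_isRightInversion {ω : List B} {t : W}
    (ht : cs.IsRightInversion (π ω) t) : t ∈ ris ω := by
  obtain ⟨τ, hτ, hτω⟩ := cs.exists_isReduced (π ω * t)
  have hnot : t ∉ ris τ := fun hmem => by
    have h := (cs.isRightInversion_of_mem_rightInvSeq hτ hmem).2
    rw [← hτω, mul_assoc, ht.1.mul_self, mul_one] at h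
    exact absurd ht.2 (not_lt.2 h.le)
  have hsign : cs.invSign (π ω) t = -1 := by
    have h := cs.invSign_mul (π ω * t) t t
    rw [mul_assoc, ht.1.mul_self, mul_one, cs.invSign_self ht.1, ht.1.inv,
      one_mul, hτω, cs.invSign_wordProd τ, count_eq_zero.2 hnot, pow_zero, mul_one] at h
    exact h
  rw [invSign_wordProd] at hsign
  refine count_pos_iff.1 (Nat.pos_of_ne_zero fun h => ?_)
  rw [h, pow_zero] at hsign
  exact absurd hsign (by decide)

theorem exists_eraseIdx_of_isRightInversion {ω : List B} {t : W}
    (ht : cs.IsRightInversion (π ω) t) : ∃ j < ω.length, π (ω.eraseIdx j) = π ω * t := by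
  obtain ⟨j, hj, hjt⟩ := mem_iff_getElem.1 (cs.mem_rightInvSeq_of_isRightInversion ht)
  rw [length_rightInvSeq] at hj
  refine ⟨j, hj, ?_⟩
  rw [← wordProd_mul_getD_rightInvSeq, getD_eq_getElem _ _ (by simpa using hj), hjt]

theorem exists_eraseIdx_of_isLeftInversion {ω : List B} {t : W}
    (ht : cs.IsLeftInversion (π ω) t) : ∃ j < ω.length, π (ω.eraseIdx j) = t * π ω := by
  rw [← isRightInversion_inv_iff, ← wordProd_reverse] at ht
  have hmem := cs.mem_rightInvSeq_of_isRightInversion ht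
  rw [rightInvSeq_reverse, mem_reverse] at hmem
  obtain ⟨j, hj, hjt⟩ := mem_iff_getElem.1 hmem
  rw [length_leftInvSeq] at hj
  refine ⟨j, hj, ?_⟩
  rw [← getD_leftInvSeq_mul_wordProd, getD_eq_getElem _ _ (by simpa using hj), hjt]

theorem IsReduced.append {ω ω' : List B} (hω : cs.IsReduced ω) (hω' : cs.IsReduced ω')
    (hℓ : ℓ (π ω * π ω') = ℓ (π ω) + ℓ (π ω')) : cs.IsReduced (ω ++ ω') := by
  rw [IsReduced, wordProd_append, hℓ, hω, hω', length_append]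

theorem exists_isReduced_sublist (ω : List B) :
    ∃ σ, σ <+ ω ∧ cs.IsReduced σ ∧ π σ = π ω := by
  induction hn : ω.length using Nat.strong_induction_on generalizing ω with
  | _ n ih =>
  rcases eq_nil_or_concat ω with rfl | ⟨ω₀, c, rfl⟩
  · exact ⟨[], Sublist.slnil, by simp [IsReduced], rfl⟩
  simp only [concat_eq_append, length_append, length_singleton] at hn ⊢
  obtain ⟨σ₀, hσ₀, hred₀, hπ₀⟩ := ih _ (by omega) ω₀ rfl
  rcases cs.length_mul_simple (π σ₀) c with hup | hdown
  · refine ⟨σ₀ ++ [c], hσ₀.append (Sublist.refl _), hred₀.append cs (by simp [IsReduced]) ?_, ?_⟩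
    · simp [hup]
    · simp [wordProd_append, hπ₀]
  · obtain ⟨j, -, hj⟩ := cs.exists_eraseIdx_of_isRightInversion (ω := σ₀)
      ⟨cs.isReflection_simple c, by omega⟩
    obtain ⟨σ, hσ, hred, hπ⟩ := ih (σ₀.eraseIdx j).length
      (by have := hσ₀.length_le; rw [length_eraseIdx]; split_ifs <;> omega) _ rfl
    refine ⟨σ, hσ.trans ((eraseIdx_sublist _ _).trans (hσ₀.trans (sublist_append_left _ _))),
      hred, ?_⟩
    rw [hπ, hj, wordProd_append, hπ₀, wordProd_singleton]

end

end CoxeterSystem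

namespace TriAvoid

open CoxeterSystem List

variable {B W : Type*} [Group W] {M : CoxeterMatrix B} (cs : CoxeterSystem M W)

local prefix:100 "s" => cs.simple
local prefix:100 "π" => cs.wordProd
local prefix:100 "ℓ" => cs.length

theorem simple_mem_parabolic {J : Set B} {i : B} (hi : i ∈ J) : s i ∈ parabolic cs J :=
  Subgroup.subset_closure ⟨i, hi, rfl⟩

theorem wordProd_mem_parabolic {J : Set B} {ω : List B} (hω : ∀ i ∈ ω, s i ∈ parabolic cs J) :
    π ω ∈ parabolic cs J :=
  (parabolic cs J).list_prod_mem (by simpa using hω)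

theorem exists_wordProd_eq_of_mem_parabolic {J : Set B} {g : W} (hg : g ∈ parabolic cs J) :
    ∃ ω : List B, (∀ i ∈ ω, i ∈ J) ∧ π ω = g := by
  induction hg using Subgroup.closure_induction_left with
  | one => exact ⟨[], by simp, rfl⟩
  | mul_left _ hx _ _ ih | inv_mul_cancel _ hx _ _ ih =>
    obtain ⟨i, hi, rfl⟩ := hx
    obtain ⟨ω, hω, rfl⟩ := ih
    exact ⟨i :: ω, by simpa [hi] using hω, by simp [wordProd_cons]⟩

theorem simple_mem_parabolic_of_isReduced {J : Set B} {ω : List B} (hω : cs.IsReduced ω)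
    (hJ : π ω ∈ parabolic cs J) {i : B} (hi : i ∈ ω) : s i ∈ parabolic cs J := by
  induction ω using List.reverseRecOn with
  | nil => simp at hi
  | append_singleton ω c ih =>
    have hred : cs.IsReduced ω := by simpa using hω.take ω.length
    have hdesc : cs.IsRightInversion (π (ω ++ [c])) (s c) := by
      refine ⟨cs.isReflection_simple c, ?_⟩
      rw [wordProd_append, wordProd_singleton, cs.simple_mul_simple_cancel_right]
      have := hω.eq
      simp only [wordProd_append, wordProd_singleton, length_append, length_singleton] at this
      rw [this, hred.eq]
      omega
    obtain ⟨σ, hσJ, hσ⟩ := exists_wordProd_eq_of_mem_parabolic cs hJ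
    rw [← hσ] at hdesc
    -- exchange inside a `J`-word for `π (ω ++ [c])` shows `π (ω ++ [c]) * s c ∈ W_J`
    obtain ⟨j, -, hj⟩ := cs.exists_eraseIdx_of_isRightInversion hdesc
    have hmul : π σ * s c ∈ parabolic cs J := hj ▸ wordProd_mem_parabolic cs
      fun k hk => simple_mem_parabolic cs (hσJ k ((eraseIdx_sublist _ _).subset hk))
    have hσJ' : π σ ∈ parabolic cs J := by rwa [hσ]
    have hc : s c ∈ parabolic cs J := by
      simpa only [inv_mul_cancel_left] using mul_mem (inv_mem hσJ') hmul
    rcases mem_append.1 hi with hi | hi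
    · refine ih hred ?_ hi
      simpa [wordProd_append, cs.simple_mul_simple_cancel_right] using mul_mem hJ hc
    · rwa [mem_singleton.1 hi]

theorem exists_simple_eq_of_simple_mem_parabolic {J : Set B} {i : B}
    (hi : s i ∈ parabolic cs J) : ∃ j ∈ J, s j = s i := by
  obtain ⟨ω, hωJ, hω⟩ := exists_wordProd_eq_of_mem_parabolic cs hi
  obtain ⟨σ, hσω, hred, hσ⟩ := cs.exists_isReduced_sublist ω
  have hlen : σ.length = 1 := by rw [← hred.eq, hσ, hω, length_simple]
  obtain ⟨j, rfl⟩ := length_eq_one_iff.1 hlen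
  exact ⟨j, hωJ j (hσω.subset (mem_singleton_self j)), by simpa [← hω] using hσ⟩

theorem length_simple_mul_mul_of_isMinRep {J : Set B} {v y : W} (hv : IsMinRep cs J v)
    {d : B} (hd : d ∈ J) (hy : y ∈ parabolic cs J) (hyv : ℓ (y * v) = ℓ y + ℓ v) :
    ℓ (s d * y * v) = ℓ (s d * y) + ℓ v := by
  rcases cs.length_simple_mul y d with hup | hdown
  · rcases cs.length_simple_mul (y * v) d with hup' | hdown'
    · rw [mul_assoc, hup', hup, hyv]
      omega
    exfalso
    obtain ⟨σ, hσ, rfl⟩ := cs.exists_isReduced y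
    obtain ⟨ρ, hρ, rfl⟩ := cs.exists_isReduced v
    obtain ⟨j, hj, hjπ⟩ := cs.exists_eraseIdx_of_isLeftInversion (ω := σ ++ ρ)
      ⟨cs.isReflection_simple d, by rw [wordProd_append]; omega⟩
    rcases lt_or_ge j σ.length with hjσ | hjσ
    · rw [eraseIdx_append_of_lt_length hjσ, wordProd_append, wordProd_append, ← mul_assoc,
        mul_left_inj] at hjπ
      have := cs.length_wordProd_le (σ.eraseIdx j)
      rw [hjπ, length_eraseIdx_of_lt hjσ, hup, hσ.eq] at this
      omega
    · rw [eraseIdx_append_of_length_le hjσ, wordProd_append, wordProd_append] at hjπ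
      have hconj : (π σ)⁻¹ * s d * π σ ∈ parabolic cs J :=
        mul_mem (mul_mem (inv_mem hy) (simple_mem_parabolic cs hd)) hy
      have hmin := hv _ hconj
      rw [hρ.eq] at hmin
      have hlen := cs.length_wordProd_le (ρ.eraseIdx (j - σ.length))
      rw [show π (ρ.eraseIdx (j - σ.length)) = (π σ)⁻¹ * s d * π σ * π ρ by
        rw [mul_assoc, mul_assoc, ← hjπ]; group, length_eraseIdx] at hlen
      split_ifs at hlen <;> simp only [length_append] at hj <;> omega
  · have h1 := cs.length_simple_mul (y * v) d
    have h2 := cs.length_mul_le (s d * y) v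
    rw [mul_assoc] at h2 ⊢
    omega

theorem length_mul_of_mem_parabolic {J : Set B} {g v : W} (hg : g ∈ parabolic cs J)
    (hv : IsMinRep cs J v) : ℓ (g * v) = ℓ g + ℓ v := by
  induction hg using Subgroup.closure_induction_left with
  | one => simp
  | mul_left _ hx y hy ih | inv_mul_cancel _ hx y hy ih =>
    obtain ⟨d, hd, rfl⟩ := hx
    simpa only [inv_simple] using length_simple_mul_mul_of_isMinRep cs hv hd hy ih

theorem exists_isMinRep_mul (J : Set B) (x : W) :
    ∃ g ∈ parabolic cs J, IsMinRep cs J (g * x) := by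
  classical
  have hex : ∃ n, ∃ g ∈ parabolic cs J, ℓ (g * x) = n := ⟨_, 1, one_mem _, rfl⟩
  obtain ⟨g, hg, hgn⟩ := Nat.find_spec hex
  refine ⟨g, hg, fun g' hg' => ?_⟩
  rw [hgn, ← mul_assoc]
  exact Nat.find_min' hex ⟨g' * g, mul_mem hg' hg, rfl⟩

theorem mem_supp_of_mem {ω : List B} (hω : cs.IsReduced ω) {i : B} (hi : i ∈ ω) :
    i ∈ supp cs (π ω) :=
  ⟨ω, [i], hω, rfl, singleton_sublist.2 hi, by simp [CoxeterSystem.IsReduced], by simp⟩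

theorem simple_mem_image_supp_iff {w : W} {i : B} :
    s i ∈ cs.simple '' supp cs w ↔ i ∈ supp cs w := by
  refine ⟨?_, fun hi => ⟨i, hi, rfl⟩⟩
  rintro ⟨j, hj, hji⟩
  change bruhatLE cs (s i) w
  rwa [← hji]

theorem simple_mem_parabolic_of_mem_supp {J : Set B} {u : W} (hu : u ∈ parabolic cs J) {i : B}
    (hi : i ∈ supp cs u) : s i ∈ parabolic cs J := by
  obtain ⟨l, l', hl, rfl, hl'l, hl', hl'i⟩ := hi
  have hlen : l'.length = 1 := by rw [← hl'.eq, hl'i, length_simple]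
  obtain ⟨c, rfl⟩ := length_eq_one_iff.1 hlen
  rw [← hl'i, wordProd_singleton]
  exact simple_mem_parabolic_of_isReduced cs hl hu (hl'l.subset (mem_singleton_self c))

theorem image_simple_supp_eq_of_mem_parabolic {J : Set B} {u : W} (hu : u ∈ parabolic cs J)
    (hJ : J ⊆ supp cs u) : cs.simple '' supp cs u = cs.simple '' J := by
  refine Set.Subset.antisymm ?_ (Set.image_mono hJ)
  rintro _ ⟨i, hi, rfl⟩
  exact exists_simple_eq_of_simple_mem_parabolic cs (simple_mem_parabolic_of_mem_supp cs hu hi)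

theorem image_simple_supp_wordProd {ω : List B} (hω : cs.IsReduced ω) :
    cs.simple '' supp cs (π ω) = cs.simple '' {i | i ∈ ω} :=
  image_simple_supp_eq_of_mem_parabolic cs
    (wordProd_mem_parabolic cs fun _ hi => simple_mem_parabolic cs hi)
    fun _ hi => mem_supp_of_mem cs hω hi

theorem supp_subset_supp_mul {u v : W} (hadd : ℓ (u * v) = ℓ u + ℓ v) :
    supp cs u ⊆ supp cs (u * v) := by
  obtain ⟨ωu, hωu, rfl⟩ := cs.exists_isReduced u
  obtain ⟨ωv, hωv, rfl⟩ := cs.exists_isReduced v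
  intro i hi
  rw [← simple_mem_image_supp_iff, ← wordProd_append,
    image_simple_supp_wordProd cs (hωu.append cs hωv hadd)]
  rw [← simple_mem_image_supp_iff, image_simple_supp_wordProd cs hωu] at hi
  exact Set.image_mono (fun j hj => mem_append_left _ hj) hi

theorem length_le_of_bruhatLE {x w : W} (h : bruhatLE cs x w) : ℓ x ≤ ℓ w := by
  obtain ⟨l, l', hl, rfl, hl'l, hl', rfl⟩ := h
  rw [hl.eq, hl'.eq]
  exact hl'l.length_le

theorem eq_of_bruhatLE_of_length_le {x w : W} (h : bruhatLE cs x w) (hℓ : ℓ w ≤ ℓ x) :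
    x = w := by
  obtain ⟨l, l', hl, rfl, hl'l, hl', rfl⟩ := h
  rw [hl'l.eq_of_length (le_antisymm hl'l.length_le (by rwa [← hl.eq, ← hl'.eq]))]

theorem bruhatLE_refl (w : W) : bruhatLE cs w w := by
  obtain ⟨ω, hω, rfl⟩ := cs.exists_isReduced w
  exact ⟨ω, ω, hω, rfl, Sublist.refl ω, hω, rfl⟩

theorem one_bruhatLE (w : W) : bruhatLE cs 1 w := by
  obtain ⟨ω, hω, rfl⟩ := cs.exists_isReduced w
  exact ⟨ω, [], hω, rfl, nil_sublist ω, by simp [CoxeterSystem.IsReduced], rfl⟩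

theorem finite_setOf_bruhatLE [Finite B] (w : W) : {x | bruhatLE cs x w}.Finite := by
  refine ((List.finite_length_le B (ℓ w)).image cs.wordProd).subset ?_
  rintro _ ⟨l, l', hl, rfl, hl'l, -, rfl⟩
  exact ⟨l', by simpa [hl.eq] using hl'l.length_le, rfl⟩

theorem finite_pred [Finite B] (w : W) : (pred cs w).Finite :=
  (finite_setOf_bruhatLE cs w).subset fun _ hx => hx.1

theorem coeff_zero (w : W) : coeff cs w 0 = 1 := by
  have : {x | bruhatLE cs x w ∧ ℓ x = 0} = {1} :=
    Set.ext fun x => ⟨fun h => cs.length_eq_zero_iff.1 h.2,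
      by rintro rfl; exact ⟨one_bruhatLE cs w, cs.length_one⟩⟩
  rw [coeff, this, Set.ncard_singleton]

theorem coeff_length (w : W) : coeff cs w (ℓ w) = 1 := by
  have : {x | bruhatLE cs x w ∧ ℓ x = ℓ w} = {w} :=
    Set.ext fun x => ⟨fun h => eq_of_bruhatLE_of_length_le cs h.1 h.2.ge,
      by rintro rfl; exact ⟨bruhatLE_refl cs x, rfl⟩⟩
  rw [coeff, this, Set.ncard_singleton]

theorem coeff_eq_zero_of_length_lt {w : W} {i : ℕ} (h : ℓ w < i) : coeff cs w i = 0 := by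
  have : {x | bruhatLE cs x w ∧ ℓ x = i} = ∅ := Set.eq_empty_of_forall_notMem fun x hx => by
    have := length_le_of_bruhatLE cs hx.1
    have := hx.2
    omega
  rw [coeff, this, Set.ncard_empty]

theorem coeff_one (w : W) : coeff cs w 1 = (cs.simple '' supp cs w).ncard := by
  have : {x | bruhatLE cs x w ∧ ℓ x = 1} = cs.simple '' supp cs w :=
    Set.ext fun x => ⟨fun ⟨hx, h1⟩ => by
        obtain ⟨i, rfl⟩ := cs.length_eq_one_iff.1 h1
        exact ⟨i, hx, rfl⟩,
      by rintro ⟨i, hi, rfl⟩; exact ⟨hi, cs.length_simple i⟩⟩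
  rw [coeff, this]

theorem coeff_length_sub_one {w : W} (hw : 1 ≤ ℓ w) :
    coeff cs w (ℓ w - 1) = (pred cs w).ncard := by
  have : {x | bruhatLE cs x w ∧ ℓ x = ℓ w - 1} = pred cs w :=
    Set.ext fun x => and_congr_right fun _ => by omega
  rw [coeff, this]

theorem kPalindromic_two_iff (w : W) :
    KPalindromic cs 2 w ↔ coeff cs w 1 = (pred cs w).ncard := by
  rcases Nat.eq_zero_or_pos (ℓ w) with hw | hw
  · have hpred : pred cs w = ∅ := Set.eq_empty_of_forall_notMem fun x hx => by
      have := hx.2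
      omega
    rw [coeff_eq_zero_of_length_lt cs (by omega), hpred, Set.ncard_empty]
    refine iff_of_true (fun i _ hiw => ?_) rfl
    obtain rfl : i = 0 := by omega
    simp [hw, coeff_zero]
  · rw [← coeff_length_sub_one cs hw]
    refine ⟨fun h => h 1 one_lt_two hw, fun h i hi _ => ?_⟩
    interval_cases i
    · rw [Nat.sub_zero, coeff_zero, coeff_length]
    · exact h

theorem exists_eraseIdx_of_mem_pred {ω : List B} {x : W} (hx : x ∈ pred cs (π ω)) :
    ∃ j < ω.length, π (ω.eraseIdx j) = x := by
  obtain ⟨⟨l, l', hl, hlω, hl'l, hl', rfl⟩, hlen⟩ := hx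
  obtain ⟨j, hj, rfl⟩ := hl'l.exists_eraseIdx_eq (by rwa [← hl.eq, ← hl'.eq, hlω])
  have ht : (cs.rightInvSeq l).getD j 1 ∈ cs.rightInvSeq l :=
    (getD_eq_getElem (cs.rightInvSeq l) 1 (by simpa using hj)).symm ▸ getElem_mem _
  rw [← wordProd_mul_getD_rightInvSeq, hlω] at hlen ⊢
  exact cs.exists_eraseIdx_of_isRightInversion
    ⟨cs.isReflection_of_mem_rightInvSeq l ht, by omega⟩

theorem eraseIdx_mem_pred {ω : List B} (hω : cs.IsReduced ω) {j : ℕ}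
    (hlen : ℓ (π (ω.eraseIdx j)) + 1 = ℓ (π ω)) : π (ω.eraseIdx j) ∈ pred cs (π ω) := by
  have hj : j < ω.length := by
    by_contra hj
    rw [eraseIdx_of_length_le (not_lt.1 hj)] at hlen
    omega
  refine ⟨⟨ω, ω.eraseIdx j, hω, rfl, eraseIdx_sublist _ _, ?_, rfl⟩, hlen⟩
  rw [CoxeterSystem.IsReduced, length_eraseIdx_of_lt hj, ← hω.eq]
  omega

theorem mul_mem_pred {w t : W} (ht : cs.IsReflection t) (hlen : ℓ (w * t) + 1 = ℓ w) :
    w * t ∈ pred cs w := by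
  obtain ⟨ω, hω, rfl⟩ := cs.exists_isReduced w
  obtain ⟨j, -, hj⟩ := cs.exists_eraseIdx_of_isRightInversion (ω := ω) ⟨ht, by omega⟩
  rw [← hj] at hlen ⊢
  exact eraseIdx_mem_pred cs hω hlen

theorem mem_parabolic_of_mem_pred {J : Set B} {u x : W} (hu : u ∈ parabolic cs J)
    (hx : x ∈ pred cs u) : x ∈ parabolic cs J := by
  obtain ⟨ω, hω, rfl⟩ := cs.exists_isReduced u
  obtain ⟨j, -, rfl⟩ := exists_eraseIdx_of_mem_pred cs hx
  exact wordProd_mem_parabolic cs fun i hi =>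
    simple_mem_parabolic_of_isReduced cs hω hu ((eraseIdx_sublist _ _).subset hi)

theorem pred_mul_eq_union {J : Set B} {u v : W} (h : IsParabolicDecomp cs J u v) :
    pred cs (u * v) = (· * v) '' pred cs u ∪ ((u * ·) '' pred cs v ∩ pred cs (u * v)) := by
  obtain ⟨hu, hv, hadd⟩ := h
  obtain ⟨ωu, hωu, rfl⟩ := cs.exists_isReduced u
  obtain ⟨ωv, hωv, rfl⟩ := cs.exists_isReduced v
  have hτ := hωu.append cs hωv hadd
  ext x
  refine ⟨fun hx => ?_, ?_⟩
  · have hℓ := hx.2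
    rw [← wordProd_append] at hx
    obtain ⟨j, hj, rfl⟩ := exists_eraseIdx_of_mem_pred cs hx
    rw [wordProd_append] at hx
    rw [hadd, hωu.eq, hωv.eq] at hℓ
    rcases lt_or_ge j ωu.length with hju | hju
    · rw [eraseIdx_append_of_lt_length hju, wordProd_append] at hℓ ⊢
      have h1 := cs.length_mul_le (π (ωu.eraseIdx j)) (π ωv)
      have h2 := cs.length_wordProd_le (ωu.eraseIdx j)
      rw [length_eraseIdx_of_lt hju] at h2
      have := hωv.eq
      exact Or.inl ⟨_, eraseIdx_mem_pred cs hωu (by rw [hωu.eq]; omega), rfl⟩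
    · rw [eraseIdx_append_of_length_le hju, wordProd_append] at hℓ hx ⊢
      have hjv : j - ωu.length < ωv.length := by rw [length_append] at hj; omega
      have h1 := cs.length_mul_le (π ωu) (π (ωv.eraseIdx (j - ωu.length)))
      have h2 := cs.length_wordProd_le (ωv.eraseIdx (j - ωu.length))
      rw [length_eraseIdx_of_lt hjv] at h2
      have := hωu.eq
      exact Or.inr ⟨⟨_, eraseIdx_mem_pred cs hωv (by rw [hωv.eq]; omega), rfl⟩, hx⟩
  · rintro (⟨u', hu', rfl⟩ | hx)
    · obtain ⟨j, hj, rfl⟩ := exists_eraseIdx_of_mem_pred cs hu'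
      have hℓ := length_mul_of_mem_parabolic cs (mem_parabolic_of_mem_pred cs hu hu') hv
      have heq : π (ωu.eraseIdx j) * π ωv = π ((ωu ++ ωv).eraseIdx j) := by
        rw [eraseIdx_append_of_lt_length hj, wordProd_append]
      show π (ωu.eraseIdx j) * π ωv ∈ pred cs (π ωu * π ωv)
      rw [heq, ← wordProd_append]
      refine eraseIdx_mem_pred cs hτ ?_
      rw [← heq, hℓ, wordProd_append, hadd]
      have := hu'.2
      omega
    · exact hx.2

theorem ncard_pred_mul [Finite B] {J : Set B} {u v : W} (h : IsParabolicDecomp cs J u v) :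
    (pred cs (u * v)).ncard =
      (pred cs u).ncard + ((u * ·) '' pred cs v ∩ pred cs (u * v)).ncard := by
  have hdisj : Disjoint ((· * v) '' pred cs u) ((u * ·) '' pred cs v ∩ pred cs (u * v)) := by
    refine Set.disjoint_left.2 ?_
    rintro _ ⟨u', hu', rfl⟩ ⟨⟨v', hv', hv'u'⟩, -⟩
    have hmin := h.2.1 _ (mul_mem (inv_mem h.1) (mem_parabolic_of_mem_pred cs h.1 hu'))
    rw [mul_assoc, ← show u * v' = u' * v from hv'u', inv_mul_cancel_left] at hmin
    have := hv'.2
    omega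
  conv_lhs => rw [pred_mul_eq_union cs h]
  rw [Set.ncard_union_eq hdisj ((finite_pred cs u).image _)
      ((finite_pred cs (u * v)).subset Set.inter_subset_right),
    Set.ncard_image_of_injective _ (mul_left_injective v)]

theorem nonempty_image_pred_inter_pred {u v : W} (hadd : ℓ (u * v) = ℓ u + ℓ v) (hv : v ≠ 1) :
    ((u * ·) '' pred cs v ∩ pred cs (u * v)).Nonempty := by
  obtain ⟨i, hi⟩ := cs.exists_rightDescent_of_ne_one hv
  have hvi : ℓ (v * s i) + 1 = ℓ v := by
    have := cs.length_mul_simple v i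
    unfold IsRightDescent at hi
    omega
  have huvi : ℓ (u * v * s i) + 1 = ℓ (u * v) := by
    have := cs.length_mul_simple (u * v) i
    have := cs.length_mul_le u (v * s i)
    rw [← mul_assoc] at this
    omega
  exact ⟨u * v * s i, ⟨v * s i, mul_mem_pred cs (cs.isReflection_simple i) hvi,
    (mul_assoc _ _ _).symm⟩, mul_mem_pred cs (cs.isReflection_simple i) huvi⟩

theorem one_le_ncard_image_pred_inter_pred [Finite B] {u v : W}
    (hadd : ℓ (u * v) = ℓ u + ℓ v) (hv : v ≠ 1) :
    1 ≤ ((u * ·) '' pred cs v ∩ pred cs (u * v)).ncard :=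
  (Set.ncard_pos ((finite_pred cs (u * v)).subset Set.inter_subset_right)).2
    (nonempty_image_pred_inter_pred cs hadd hv)

theorem coeff_one_mul [Finite B] {u v : W} (hadd : ℓ (u * v) = ℓ u + ℓ v)
    (hsupp : (supp cs (u * v)).ncard = (supp cs u).ncard + 1) :
    coeff cs (u * v) 1 = coeff cs u 1 + 1 := by
  have hsub := supp_subset_supp_mul cs hadd
  obtain ⟨i, hi⟩ : ∃ i, supp cs (u * v) \ supp cs u = {i} := by
    rw [← Set.ncard_eq_one, Set.ncard_sdiff hsub]
    omega
  have hiu : i ∉ supp cs u := (hi ▸ Set.mem_singleton i).2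
  have himage : cs.simple '' supp cs (u * v) = insert (s i) (cs.simple '' supp cs u) := by
    rw [← Set.image_insert_eq, ← Set.union_singleton, ← hi, Set.union_sdiff_cancel hsub]
  rw [coeff_one, coeff_one, himage,
    Set.ncard_insert_of_notMem (by rwa [simple_mem_image_supp_iff]) ((Set.toFinite _).image _)]

theorem isParabolicDecomp_mul_inv_mul {J : Set B} {a g x : W} (ha : a ∈ parabolic cs J)
    (hg : g ∈ parabolic cs J) (hmin : IsMinRep cs J (g * x)) (hax : ℓ (a * x) = ℓ a + ℓ x) :
    IsParabolicDecomp cs J (a * g⁻¹) (g * x) ∧ ℓ (a * g⁻¹) = ℓ a + ℓ g⁻¹ := by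
  have hx := length_mul_of_mem_parabolic cs (inv_mem hg) hmin
  have h1 := cs.length_mul_le a g⁻¹
  have h2 := cs.length_mul_le (a * g⁻¹) (g * x)
  rw [inv_mul_cancel_left] at hx
  rw [mul_assoc, inv_mul_cancel_left] at h2
  refine ⟨⟨mul_mem ha (inv_mem hg), hmin, ?_⟩, by omega⟩
  rw [mul_assoc, inv_mul_cancel_left]
  omega

theorem exists_isParabolicDecomp_coeff_one_eq_succ {w : W} (hw : w ≠ 1) :
    ∃ J u v, w = u * v ∧ IsParabolicDecomp cs J u v ∧ v ≠ 1 ∧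
      coeff cs w 1 = coeff cs u 1 + 1 := by
  obtain ⟨ω, hω, rfl⟩ := cs.exists_isReduced w
  obtain ⟨α, k, β, rfl, hk, himg⟩ :=
    exists_append_cons_image_eq_insert cs.simple (l := ω) (by rintro rfl; exact hw rfl)
  set J := {i | i ∈ α}
  have hαJ : π α ∈ parabolic cs J :=
    wordProd_mem_parabolic cs fun i hi => simple_mem_parabolic cs hi
  have hkJ : s k ∉ parabolic cs J := fun h => by
    obtain ⟨j, hj, hjk⟩ := exists_simple_eq_of_simple_mem_parabolic cs h
    exact hk ⟨j, hj, hjk⟩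
  have hα : cs.IsReduced α := by simpa using hω.take α.length
  have hkβ : cs.IsReduced (k :: β) := by simpa using hω.drop α.length
  have hsplit : ℓ (π α * π (k :: β)) = ℓ (π α) + ℓ (π (k :: β)) := by
    rw [← wordProd_append, hω.eq, hα.eq, hkβ.eq, length_append]
  -- absorb the `W_J`-part of `π (k :: β)` into `u`
  obtain ⟨g, hg, hmin⟩ := exists_isMinRep_mul cs J (π (k :: β))
  obtain ⟨h, hulen⟩ := isParabolicDecomp_mul_inv_mul cs hαJ hg hmin hsplit
  obtain ⟨ωg, hωg, hωg_eq⟩ := cs.exists_isReduced g⁻¹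
  have hu : cs.IsReduced (α ++ ωg) := hα.append cs hωg (by rwa [← hωg_eq])
  have hwuv : π (α ++ k :: β) = π α * g⁻¹ * (g * π (k :: β)) := by
    rw [wordProd_append, mul_assoc, inv_mul_cancel_left]
  refine ⟨J, _, _, hwuv, h, fun hv => hkJ ?_, ?_⟩
  · refine simple_mem_parabolic_of_isReduced cs hω ?_ (mem_append_right _ (mem_cons_self ..))
    rw [hwuv, hv, mul_one]
    exact h.1
  · have hJ : J ⊆ supp cs (π α * g⁻¹) := fun i hi => by
      simpa [wordProd_append, ← hωg_eq] using mem_supp_of_mem cs hu (mem_append_left _ hi)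
    rw [coeff_one, coeff_one, image_simple_supp_wordProd cs hω, himg,
      image_simple_supp_eq_of_mem_parabolic cs h.1 hJ,
      Set.ncard_insert_of_notMem hk (α.finite_toSet.image _)]

theorem coeff_one_le_ncard_pred [Finite B] (w : W) : coeff cs w 1 ≤ (pred cs w).ncard := by
  induction hn : ℓ w using Nat.strong_induction_on generalizing w with
  | _ n ih =>
  by_cases hw : w = 1
  · rw [coeff_eq_zero_of_length_lt cs (by simp [hw])]
    exact Nat.zero_le _
  obtain ⟨J, u, v, rfl, h, hv, hcoeff⟩ := exists_isParabolicDecomp_coeff_one_eq_succ cs hw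
  have hvpos : 0 < ℓ v := Nat.pos_of_ne_zero fun h0 => hv (cs.length_eq_zero_iff.1 h0)
  have hu := ih (ℓ u) (by rw [← hn, h.2.2]; omega) u rfl
  have := ncard_pred_mul cs h
  have := one_le_ncard_image_pred_inter_pred cs h.2.2 hv
  omega

end TriAvoid

namespace TriAvoid

/-- **Lemma 2.8.** Suppose `w = uv` is a Grassmannian factorization. Then `w` is 2-palindromic
if and only if `u` is 2-palindromic and `|u·pred(v) ∩ pred(w)| = 1`. -/
theorem two_palindromic_iff_of_grassmannian
    {B W : Type*} [Finite B] [Group W] {M : CoxeterMatrix B} (cs : CoxeterSystem M W)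
    (w u v : W) (hw : w = u * v) (hG : IsGrassmannian cs u v) :
    KPalindromic cs 2 w ↔
      KPalindromic cs 2 u ∧ (((u * ·) '' pred cs v) ∩ pred cs w).ncard = 1 := by
  obtain ⟨h, hsupp⟩ := hG
  subst hw
  have hv : v ≠ 1 := by
    rintro rfl
    rw [mul_one] at hsupp
    omega
  have hcoeff := coeff_one_mul cs h.2.2 hsupp
  have hpred := ncard_pred_mul cs h
  have hk := one_le_ncard_image_pred_inter_pred cs h.2.2 hv
  have hu := coeff_one_le_ncard_pred cs u
  rw [kPalindromic_two_iff, kPalindromic_two_iff]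
  omega

end TriAvoid
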